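/- The sequence (θ_m) satisfies θ_0 > 0 and θ_m < 0 for every integer m ≥ 1. -/

import Mathlib

/-!
Clearing denominators, the recurrence reads
`(m+2)(1+α) θ_{m+2} = (2(m+1) - (1-α)(2α+1)) θ_{m+1} + (1-α)(1-m) θ_m`.
The first terms are signed by hand: `θ_0 > 0`, `θ_1 < 0`, and `2(1+α)² θ_2 = -4α³(1-α) θ_0 < 0`.
From then on the weighted terms `k(k-1) θ_k` are nonincreasing: since `1 - α ≥ 0`, the inequality
`(k+1) θ_{k+1} ≤ (k-1) θ_k` propagates through the recurrence as long as `θ_{k+1} < 0`.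
-/

/-- The sequence `θ_m`. -/
noncomputable def seqTheta (α : ℝ) : ℕ → ℝ
  | 0 => ((α + 1) / (2 * α)) ^ α
  | 1 => (α - 1) * (2 * α + 1) / (α + 1) * seqTheta α 0
  | (m + 2) =>
      2 * α / (((m : ℝ) + 2) * (1 + α)) *
        (((((m : ℝ) + 2) - 1) / α - (1 - α) / (2 * α) * (2 * α + 1)) * seqTheta α (m + 1) +
          (1 - α) / (2 * α) * (3 - ((m : ℝ) + 2)) * seqTheta α m)

section

variable {α : ℝ}

lemma seqTheta_zero_pos (hα : 0 < α) : 0 < seqTheta α 0 :=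
  Real.rpow_pos_of_pos (by positivity) α

lemma seqTheta_one_neg (h₀ : 0 < α) (h₁ : α < 1) : seqTheta α 1 < 0 := by
  rw [seqTheta.eq_2]
  have hcoeff : (α - 1) * (2 * α + 1) / (α + 1) < 0 :=
    div_neg_of_neg_of_pos (mul_neg_of_neg_of_pos (by linarith) (by linarith)) (by linarith)
  exact mul_neg_of_neg_of_pos hcoeff (seqTheta_zero_pos h₀)

lemma add_one_mul_seqTheta_one (hα : 0 < α) :
    (α + 1) * seqTheta α 1 = (α - 1) * (2 * α + 1) * seqTheta α 0 := by
  rw [seqTheta.eq_2]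
  field_simp

lemma mul_seqTheta_add_two (hα : 0 < α) (m : ℕ) :
    ((m : ℝ) + 2) * (1 + α) * seqTheta α (m + 2) =
      (2 * ((m : ℝ) + 1) - (1 - α) * (2 * α + 1)) * seqTheta α (m + 1) +
        (1 - α) * (1 - (m : ℝ)) * seqTheta α m := by
  rw [seqTheta]
  field_simp
  ring

lemma seqTheta_two_neg (h₀ : 0 < α) (h₁ : α < 1) : seqTheta α 2 < 0 := by
  have hrec := mul_seqTheta_add_two h₀ 0
  push_cast at hrec
  have htwo : 2 * (1 + α) ^ 2 * seqTheta α 2 = -(4 * α ^ 3 * (1 - α)) * seqTheta α 0 := by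
    linear_combination (α + 1) * hrec + (2 - (1 - α) * (2 * α + 1)) * add_one_mul_seqTheta_one h₀
  have hpos : 0 < 4 * α ^ 3 * (1 - α) * seqTheta α 0 :=
    mul_pos (mul_pos (by positivity) (by linarith)) (seqTheta_zero_pos h₀)
  have hneg : 2 * (1 + α) ^ 2 * seqTheta α 2 < 0 := by
    rw [htwo]
    linarith
  exact neg_of_mul_neg_right hneg (by positivity)

lemma seqTheta_step (h₀ : 0 < α) (h₁ : α ≤ 1) (k : ℕ) (hneg : seqTheta α (k + 1) < 0)
    (hle : ((k : ℝ) + 1) * seqTheta α (k + 1) ≤ ((k : ℝ) - 1) * seqTheta α k) :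
    ((k : ℝ) + 2) * seqTheta α (k + 2) ≤ k * seqTheta α (k + 1) := by
  have hbound : ((k : ℝ) + 2) * (1 + α) * seqTheta α (k + 2) ≤
      (((k : ℝ) + 1) * (1 + α) - (1 - α) * (2 * α + 1)) * seqTheta α (k + 1) := by
    linear_combination mul_seqTheta_add_two h₀ k + mul_nonneg (sub_nonneg.2 h₁) (sub_nonneg.2 hle)
  -- `hbound` misses the goal by `((1 + α) - (1 - α) * (2 * α + 1)) * θ_{k+1} = 2 * α ^ 2 * θ_{k+1}`
  have hslack : 0 ≤ 2 * α ^ 2 * -seqTheta α (k + 1) :=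
    mul_nonneg (by positivity) (by linarith)
  have hmul : (1 + α) * (((k : ℝ) + 2) * seqTheta α (k + 2)) ≤
      (1 + α) * (k * seqTheta α (k + 1)) := by
    linarith
  exact le_of_mul_le_mul_left hmul (by linarith)

lemma seqTheta_add_two_neg_and_le (h₀ : 0 < α) (h₁ : α < 1) (n : ℕ) :
    seqTheta α (n + 2) < 0 ∧ ((n : ℝ) + 2) * seqTheta α (n + 2) ≤ n * seqTheta α (n + 1) := by
  induction n with
  | zero =>
    have h₂ := seqTheta_two_neg h₀ h₁
    exact ⟨h₂, by push_cast; linarith⟩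
  | succ n ih =>
    obtain ⟨hneg, hle⟩ := ih
    have hstep := seqTheta_step h₀ h₁.le (n + 1) hneg (by push_cast; linarith)
    push_cast at hstep ⊢
    have hmul_neg : ((n : ℝ) + 1 + 2) * seqTheta α (n + 3) < 0 :=
      hstep.trans_lt (mul_neg_of_pos_of_neg (by positivity) hneg)
    exact ⟨neg_of_mul_neg_right hmul_neg (by positivity), hstep⟩

end

theorem seqTheta_sign (α : ℝ) (hα : α ∈ Set.Ioo (0 : ℝ) 1) :
    0 < seqTheta α 0 ∧ ∀ m : ℕ, 1 ≤ m → seqTheta α m < 0 := by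
  obtain ⟨h₀, h₁⟩ := hα
  refine ⟨seqTheta_zero_pos h₀, fun m hm => ?_⟩
  obtain ⟨k, rfl⟩ := Nat.exists_eq_add_of_le' hm
  cases k with
  | zero => exact seqTheta_one_neg h₀ h₁
  | succ n => exact (seqTheta_add_two_neg_and_le h₀ h₁ n).1
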